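/- Let 1 ≤ M ≤ N, let Ω_N ⊆ ℂ^N and Ω_M ⊆ ℂ^M be open sets, and let f : Ω_N → Ω_M be given by f(z) = cAz + w_0, where c ∈ ℝ, w_0 ∈ ℂ^M and A is an M×N homothety-projection matrix. Then for every harmonic function h : Ω_M → ℝ, the composition h∘f : Ω_N → ℝ is harmonic. (Theorem B, implication (3)⇒(2).) -/

import Mathlib

/-- The Laplacian of `h : ℂ^m → ℝ` at `w`: the trace of the second real Fréchet
derivative with respect to the orthonormal ℝ-basis `e_1, i·e_1, …, e_m, i·e_m`. -/
noncomputable def laplacian {m : ℕ} (h : (Fin m → ℂ) → ℝ) (w : Fin m → ℂ) : ℝ :=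
  ∑ j : Fin m, (fderiv ℝ (fderiv ℝ h) w (Pi.single j 1) (Pi.single j 1)
    + fderiv ℝ (fderiv ℝ h) w (Pi.single j Complex.I) (Pi.single j Complex.I))

/-- `h` is harmonic on `Ω ⊆ ℂ^m`: C² with vanishing Laplacian. -/
def HarmonicOn {m : ℕ} (Ω : Set (Fin m → ℂ)) (h : (Fin m → ℂ) → ℝ) : Prop :=
  ContDiffOn ℝ 2 h Ω ∧ ∀ w ∈ Ω, laplacian h w = 0

/-- An `M × N` complex matrix is a homothety-projection matrix if its rows are pairwise
orthogonal and all have the same Euclidean norm. -/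
def IsHomothetyProjection {M N : ℕ} (A : Matrix (Fin M) (Fin N) ℂ) : Prop :=
  (∀ j k, j ≠ k → ∑ i, A j i * (starRingEnd ℂ) (A k i) = 0) ∧
  ∀ j k, ∑ i, ‖A j i‖ ^ 2 = ∑ i, ‖A k i‖ ^ 2

/-! Since `f` is affine with linear part `L = cA`, `D²(h ∘ f)(z)(v, u) = D²h(f z)(Lv, Lu)`, so the
Laplacian of `h ∘ f` at `z` is `∑ⱼ B(aⱼ, aⱼ) + B(i aⱼ, i aⱼ)` with `B = D²h(f z)` and `aⱼ` the
columns of `cA`. For a real bilinear form `B`, the quantity `B(u, u) + B(iu, iu)` is a real-linear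
function of the Hermitian matrix `u uᴴ`, and the homothety-projection condition says exactly that
`∑ⱼ aⱼ aⱼᴴ = r · 1` for some real `r`. The sum is therefore `r` times the Laplacian of `h` at
`f z`, which vanishes. -/

open Topology Complex ComplexConjugate

theorem IsHomothetyProjection.smul {M N : ℕ} {A : Matrix (Fin M) (Fin N) ℂ}
    (hA : IsHomothetyProjection A) (a : ℂ) : IsHomothetyProjection (a • A) := by
  refine ⟨fun j k hjk => ?_, fun j k => ?_⟩
  · rw [← mul_zero (a * conj a), ← hA.1 j k hjk, Finset.mul_sum]
    refine Finset.sum_congr rfl fun i _ => ?_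
    simp only [Matrix.smul_apply, smul_eq_mul, map_mul]
    ring
  · simp only [Matrix.smul_apply, smul_eq_mul, norm_mul, mul_pow, ← Finset.mul_sum, hA.2 j k]

theorem IsHomothetyProjection.exists_sum_mul_conj_eq_ite {M N : ℕ}
    {A : Matrix (Fin M) (Fin N) ℂ} (hA : IsHomothetyProjection A) :
    ∃ r : ℝ, ∀ p q, ∑ i, A p i * conj (A q i) = if p = q then (r : ℂ) else 0 := by
  rcases isEmpty_or_nonempty (Fin M) with _ | ⟨⟨p₀⟩⟩
  · exact ⟨0, fun p => isEmptyElim p⟩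
  refine ⟨∑ i, ‖A p₀ i‖ ^ 2, fun p q => ?_⟩
  split_ifs with hpq
  · simp_rw [hpq, mul_conj', ← hA.2 q p₀, ofReal_sum, ofReal_pow]
  · exact hA.1 p q hpq

theorem add_apply_I_mul_I_mul (b : ℂ →L[ℝ] ℂ →L[ℝ] ℝ) (s t : ℂ) :
    b s t + b (I * s) (I * t) =
      (s * conj t).re * (b 1 1 + b I I) + (s * conj t).im * (b I 1 - b 1 I) := by
  have hdecomp : ∀ w : ℂ, w = w.re • (1 : ℂ) + w.im • I := fun w => by simp
  rw [hdecomp s, hdecomp t]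
  simp only [mul_add, mul_smul_comm, mul_one, I_mul_I, map_add, map_smul, map_neg, add_apply,
    smul_apply, neg_apply, smul_eq_mul, mul_re, mul_im, I_re, I_im, conj_re, conj_im, add_re,
    add_im, smul_re, smul_im, one_re, one_im]
  ring

section ComplexTrace

variable {ι : Type*} [Fintype ι] [DecidableEq ι]

theorem apply_eq_sum_sum_single (B : (ι → ℂ) →L[ℝ] (ι → ℂ) →L[ℝ] ℝ) (u v : ι → ℂ) :
    B u v = ∑ p, ∑ q, B (Pi.single p (u p)) (Pi.single q (v q)) := by
  conv_lhs => rw [← Finset.univ_sum_single u, ← Finset.univ_sum_single v]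
  simp only [map_sum, FunLike.coe_sum, Finset.sum_apply]
  exact Finset.sum_comm

noncomputable def complexTrace (B : (ι → ℂ) →L[ℝ] (ι → ℂ) →L[ℝ] ℝ) : ℝ :=
  ∑ p, (B (Pi.single p 1) (Pi.single p 1) + B (Pi.single p I) (Pi.single p I))

theorem laplacian_eq_complexTrace {m : ℕ} (h : (Fin m → ℂ) → ℝ) (w : Fin m → ℂ) :
    laplacian h w = complexTrace (fderiv ℝ (fderiv ℝ h) w) := rfl

theorem add_apply_I_smul_eq_sum (B : (ι → ℂ) →L[ℝ] (ι → ℂ) →L[ℝ] ℝ) (u : ι → ℂ) :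
    B u u + B (I • u) (I • u) = ∑ p, ∑ q,
      ((u p * conj (u q)).re *
          (B (Pi.single p 1) (Pi.single q 1) + B (Pi.single p I) (Pi.single q I))
        + (u p * conj (u q)).im *
          (B (Pi.single p I) (Pi.single q 1) - B (Pi.single p 1) (Pi.single q I))) := by
  rw [apply_eq_sum_sum_single B u, apply_eq_sum_sum_single B (I • u)]
  simp only [← Finset.sum_add_distrib]
  refine Finset.sum_congr rfl fun p _ => Finset.sum_congr rfl fun q _ => ?_
  exact add_apply_I_mul_I_mul
    (B.bilinearComp (.single ℝ (fun _ => ℂ) p) (.single ℝ (fun _ => ℂ) q)) (u p) (u q)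

theorem sum_add_apply_I_smul_eq_mul_complexTrace {κ : Type*} [Fintype κ]
    (B : (ι → ℂ) →L[ℝ] (ι → ℂ) →L[ℝ] ℝ) (u : κ → ι → ℂ) (r : ℝ)
    (hu : ∀ p q, ∑ j, u j p * conj (u j q) = if p = q then (r : ℂ) else 0) :
    ∑ j, (B (u j) (u j) + B (I • u j) (I • u j)) = r * complexTrace B := by
  simp only [add_apply_I_smul_eq_sum]
  rw [Finset.sum_comm]
  simp only [Finset.sum_comm (γ := κ), Finset.sum_add_distrib, ← Finset.sum_mul, ← re_sum,
    ← im_sum, hu]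
  simp [complexTrace, Finset.mul_sum, apply_ite]

end ComplexTrace

theorem fderiv_fderiv_comp_apply_of_hasFDerivAt {E F G : Type*}
    [NormedAddCommGroup E] [NormedSpace ℝ E] [NormedAddCommGroup F] [NormedSpace ℝ F]
    [NormedAddCommGroup G] [NormedSpace ℝ G]
    {h : F → G} {f : E → F} {L : E →L[ℝ] F} {z : E}
    (hf : ∀ x, HasFDerivAt f L x) (hh : ContDiffAt ℝ 2 h (f z)) (v u : E) :
    fderiv ℝ (fderiv ℝ (h ∘ f)) z v u = fderiv ℝ (fderiv ℝ h) (f z) (L v) (L u) := by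
  have hD : fderiv ℝ (h ∘ f) =ᶠ[𝓝 z] ContinuousLinearMap.precomp G L ∘ fderiv ℝ h ∘ f := by
    filter_upwards [(hf z).continuousAt.eventually (hh.eventually (by simp))] with x hx
    exact ((hx.differentiableAt two_ne_zero).hasFDerivAt.comp x (hf x)).fderiv
  have hD2 : DifferentiableAt ℝ (fderiv ℝ h) (f z) :=
    (hh.fderiv_right (m := 1) le_rfl).differentiableAt one_ne_zero
  rw [hD.fderiv_eq, ((ContinuousLinearMap.precomp G L).hasFDerivAt.comp z
    (hD2.hasFDerivAt.comp z (hf z))).fderiv]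
  rfl

theorem theoremB_3_implies_2_general (N M : ℕ)
    (ΩN : Set (Fin N → ℂ)) (ΩM : Set (Fin M → ℂ))
    (hΩM : IsOpen ΩM)
    (f : (Fin N → ℂ) → (Fin M → ℂ)) (hmaps : Set.MapsTo f ΩN ΩM)
    (c : ℝ) (w₀ : Fin M → ℂ) (A : Matrix (Fin M) (Fin N) ℂ)
    (hA : IsHomothetyProjection A)
    (hf : ∀ z, f z = (c : ℂ) • A.mulVec z + w₀) :
    ∀ h : (Fin M → ℂ) → ℝ, HarmonicOn ΩM h → HarmonicOn ΩN (h ∘ f) := by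
  rintro h ⟨hh, hlap⟩
  let L : (Fin N → ℂ) →L[ℝ] (Fin M → ℂ) :=
    LinearMap.toContinuousLinearMap ((((c : ℂ) • A).mulVecLin).restrictScalars ℝ)
  have hf_affine : f = fun z => L z + w₀ := funext fun z => by simp [hf, L]
  have hfL : ∀ x, HasFDerivAt f L x := fun x => hf_affine ▸ L.hasFDerivAt.add_const w₀
  refine ⟨hh.comp (hf_affine ▸ L.contDiff.add contDiff_const).contDiffOn hmaps, fun z hz => ?_⟩
  obtain ⟨r, hr⟩ := (hA.smul (c : ℂ)).exists_sum_mul_conj_eq_ite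
  have hhz : ContDiffAt ℝ 2 h (f z) := hh.contDiffAt (hΩM.mem_nhds (hmaps hz))
  have hL : ∀ j, L (Pi.single j 1) = ((c : ℂ) • A).col j ∧
      L (Pi.single j I) = I • ((c : ℂ) • A).col j := fun j => by
    refine ⟨Matrix.mulVec_single_one _ j, ?_⟩
    ext i
    simp [L, Matrix.mulVec_single]
    ring
  simp only [laplacian, fderiv_fderiv_comp_apply_of_hasFDerivAt hfL hhz, hL]
  rw [sum_add_apply_I_smul_eq_mul_complexTrace _ ((c : ℂ) • A).col r hr,
    ← laplacian_eq_complexTrace, hlap _ (hmaps hz), mul_zero]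

/-- Theorem B, implication (3) ⇒ (2): if `f(z) = cAz + w₀` with `A` a homothety-projection
matrix, then `h ∘ f` is harmonic for every harmonic `h`. -/
theorem theoremB_3_implies_2 (N M : ℕ) (hM : 1 ≤ M) (hMN : M ≤ N)
    (ΩN : Set (Fin N → ℂ)) (ΩM : Set (Fin M → ℂ))
    (hΩN : IsOpen ΩN) (hΩM : IsOpen ΩM)
    (f : (Fin N → ℂ) → (Fin M → ℂ)) (hmaps : Set.MapsTo f ΩN ΩM)
    (c : ℝ) (w₀ : Fin M → ℂ) (A : Matrix (Fin M) (Fin N) ℂ)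
    (hA : IsHomothetyProjection A)
    (hf : ∀ z, f z = (c : ℂ) • A.mulVec z + w₀) :
    ∀ h : (Fin M → ℂ) → ℝ, HarmonicOn ΩM h → HarmonicOn ΩN (h ∘ f) :=
  theoremB_3_implies_2_general N M ΩN ΩM hΩM f hmaps c w₀ A hA hf
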